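/- arXiv:2602.22602 — 3 statements merged into one kernel-verified Lean document; each statement's English description precedes it below -/
import Mathlib

section
/- Let (Ω, F, P) be a probability space, let A, G, M be sub-σ-algebras of F, and let Z be an M-measurable integrable random variable with values in ℝ^l. Assume that (i) Z is independent of G, and (ii) A and M are conditionally independent given G. Then Z is independent of the join A ⊔ G. -/
open MeasureTheory ProbabilityTheory

/-- Conditional independence of two sub-σ-algebras given a third, in the standard sense:
for all `A₁` in the first and `A₂` in the second,
`E[1_{A₁} 1_{A₂} | G] = E[1_{A₁} | G] · E[1_{A₂} | G]` almost surely. -/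
def CondIndepSigmaAlgebras {Ω : Type*} [mΩ : MeasurableSpace Ω] (μ : Measure Ω)
    (m₁ m₂ G : MeasurableSpace Ω) : Prop :=
  ∀ A₁ A₂ : Set Ω, MeasurableSet[m₁] A₁ → MeasurableSet[m₂] A₂ →
    μ[(A₁ ∩ A₂).indicator (fun _ => (1 : ℝ)) | G]
      =ᵐ[μ] fun ω => (μ[A₁.indicator (fun _ => (1 : ℝ)) | G]) ω
        * (μ[A₂.indicator (fun _ => (1 : ℝ)) | G]) ω

/-!
The sets `a ∩ g` with `a ∈ A`, `g ∈ G` form a π-system generating `A ⊔ G`, so it suffices to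
show `P(S ∩ a ∩ g) = P(S) P(a ∩ g)` for every event `S` of `Z`. As `S ∈ M`, conditional
independence gives `E[1_{a ∩ S} | G] = E[1_a | G] E[1_S | G]`, and independence of `Z` from `G`
makes `E[1_S | G] = P(S)` constant. Integrating over `g ∈ G` yields
`P(a ∩ S ∩ g) = P(S) ∫_g E[1_a | G] = P(S) P(a ∩ g)`.
-/

open Set

namespace MeasurableSpace

variable {Ω : Type*}

theorem isPiSystem_image2_inter_measurableSet (m₁ m₂ : MeasurableSpace Ω) :
    IsPiSystem (image2 (· ∩ ·) {s | MeasurableSet[m₁] s} {t | MeasurableSet[m₂] t}) := by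
  rintro _ ⟨a, ha, g, hg, rfl⟩ _ ⟨a', ha', g', hg', rfl⟩ -
  exact ⟨a ∩ a', ha.inter ha', g ∩ g', hg.inter hg', inter_inter_inter_comm a a' g g'⟩

theorem generateFrom_image2_inter_measurableSet (m₁ m₂ : MeasurableSpace Ω) :
    generateFrom (image2 (· ∩ ·) {s | MeasurableSet[m₁] s} {t | MeasurableSet[m₂] t}) =
      m₁ ⊔ m₂ := by
  refine le_antisymm (generateFrom_le ?_) (sup_le ?_ ?_)
  · rintro _ ⟨a, ha, g, hg, rfl⟩
    exact (le_sup_left (a := m₁) _ ha).inter (le_sup_right (a := m₁) _ hg)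
  · exact fun s hs ↦ measurableSet_generateFrom ⟨s, hs, univ, MeasurableSet.univ, inter_univ s⟩
  · exact fun s hs ↦ measurableSet_generateFrom ⟨univ, MeasurableSet.univ, s, hs, univ_inter s⟩

end MeasurableSpace

section

variable {Ω : Type*} {m A G mΩ : MeasurableSpace Ω} {μ : Measure[mΩ] Ω}

theorem CondIndepSigmaAlgebras.mono_right {m' : MeasurableSpace Ω}
    (h : CondIndepSigmaAlgebras (mΩ := mΩ) μ A m G) (hle : m' ≤ m) :
    CondIndepSigmaAlgebras (mΩ := mΩ) μ A m' G :=
  fun a s ha hs ↦ h a s ha (hle s hs)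

theorem condExp_indicator_one_of_indep [IsFiniteMeasure μ] {s : Set Ω} (hm : m ≤ mΩ)
    (hG : G ≤ mΩ) (hindep : Indep m G μ) (hs : MeasurableSet[m] s) :
    μ[s.indicator (fun _ ↦ (1 : ℝ)) | G] =ᵐ[μ] fun _ ↦ μ.real s := by
  have hmeas : StronglyMeasurable[m] (s.indicator fun _ ↦ (1 : ℝ)) :=
    stronglyMeasurable_const.indicator hs
  simpa only [← Pi.one_def, integral_indicator_one (hm s hs)] using
    condExp_indep_eq hm hG hmeas hindep

theorem setIntegral_condExp_indicator_one [IsFiniteMeasure μ] (hG : G ≤ mΩ) {a g : Set Ω}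
    (ha : MeasurableSet a) (hg : MeasurableSet[G] g) :
    ∫ x in g, (μ[a.indicator (fun _ ↦ (1 : ℝ)) | G]) x ∂μ = μ.real (a ∩ g) := by
  rw [setIntegral_condExp hG ((integrable_const (1 : ℝ)).indicator ha) hg, ← Pi.one_def,
    integral_indicator_one ha, measureReal_restrict_apply ha]

theorem measureReal_inter_inter_eq_mul_of_condIndep [IsFiniteMeasure μ] (hm : m ≤ mΩ)
    (hA : A ≤ mΩ) (hG : G ≤ mΩ) (hindep : Indep m G μ)
    (hci : CondIndepSigmaAlgebras (mΩ := mΩ) μ A m G) {s a g : Set Ω} (hs : MeasurableSet[m] s)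
    (ha : MeasurableSet[A] a) (hg : MeasurableSet[G] g) :
    μ.real (s ∩ (a ∩ g)) = μ.real s * μ.real (a ∩ g) := calc
  μ.real (s ∩ (a ∩ g)) = ∫ x in g, (μ[(a ∩ s).indicator (fun _ ↦ (1 : ℝ)) | G]) x ∂μ := by
    rw [setIntegral_condExp_indicator_one hG ((hA a ha).inter (hm s hs)) hg, inter_left_comm,
      inter_assoc]
  _ = ∫ x in g, (μ[a.indicator (fun _ ↦ (1 : ℝ)) | G]) x * μ.real s ∂μ := by
    refine integral_congr_ae (ae_restrict_of_ae ?_)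
    filter_upwards [hci a s ha hs, condExp_indicator_one_of_indep hm hG hindep hs]
      with x hcond hconst
    rw [hcond, hconst]
  _ = μ.real s * μ.real (a ∩ g) := by
    rw [integral_mul_const, setIntegral_condExp_indicator_one hG (hA a ha) hg, mul_comm]

theorem indep_sup_of_condIndep [IsProbabilityMeasure μ] (hm : m ≤ mΩ) (hA : A ≤ mΩ)
    (hG : G ≤ mΩ) (hindep : Indep m G μ) (hci : CondIndepSigmaAlgebras (mΩ := mΩ) μ A m G) :
    Indep m (A ⊔ G) μ := by
  refine IndepSets.indep hm (sup_le hA hG) (@MeasurableSpace.isPiSystem_measurableSet Ω m)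
    (MeasurableSpace.isPiSystem_image2_inter_measurableSet A G)
    (@MeasurableSpace.generateFrom_measurableSet Ω m).symm
    (MeasurableSpace.generateFrom_image2_inter_measurableSet A G).symm ?_
  rw [IndepSets_iff]
  rintro s _ hs ⟨a, ha, g, hg, rfl⟩
  have h := measureReal_inter_inter_eq_mul_of_condIndep hm hA hG hindep hci hs ha hg
  rwa [measureReal_def, measureReal_def, measureReal_def, ← ENNReal.toReal_mul,
    ENNReal.toReal_eq_toReal_iff' (by finiteness) (by finiteness)] at h

end

theorem indep_join_of_condIndep_general
    {Ω : Type*} [mΩ : MeasurableSpace Ω] (μ : Measure Ω) [IsProbabilityMeasure μ]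
    {l : ℕ} (A G M : MeasurableSpace Ω) (hA : A ≤ mΩ) (hG : G ≤ mΩ) (hM : M ≤ mΩ)
    (Z : Ω → EuclideanSpace ℝ (Fin l)) (hZmeas : Measurable[M] Z)
    (hZindep : Indep (MeasurableSpace.comap Z inferInstance) G μ)
    (hCondIndep : CondIndepSigmaAlgebras (mΩ := mΩ) μ A M G) :
    Indep (MeasurableSpace.comap Z inferInstance) (A ⊔ G) μ :=
  indep_sup_of_condIndep (hZmeas.comap_le.trans hM) hA hG hZindep
    (hCondIndep.mono_right hZmeas.comap_le)

/-- If an `M`-measurable integrable random vector `Z` is independent of `G`, and `A` and `M`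
are conditionally independent given `G`, then `Z` is independent of the join `A ⊔ G`. -/
theorem indep_join_of_condIndep
    {Ω : Type*} [mΩ : MeasurableSpace Ω] (μ : Measure Ω) [IsProbabilityMeasure μ]
    {l : ℕ} (A G M : MeasurableSpace Ω) (hA : A ≤ mΩ) (hG : G ≤ mΩ) (hM : M ≤ mΩ)
    (Z : Ω → EuclideanSpace ℝ (Fin l)) (hZmeas : Measurable[M] Z)
    (hZint : Integrable Z μ)
    (hZindep : Indep (MeasurableSpace.comap Z inferInstance) G μ)
    (hCondIndep : CondIndepSigmaAlgebras (mΩ := mΩ) μ A M G) :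
    Indep (MeasurableSpace.comap Z inferInstance) (A ⊔ G) μ :=
  indep_join_of_condIndep_general (mΩ := mΩ) μ A G M hA hG hM Z hZmeas hZindep hCondIndep
end

section
/- Let (Ω′, F′, P′) be a probability space, S a metric space, m ≥ 1 and C ≥ 0. Let Z_n, Z : Ω′ → ℝ^d and V_n, V : Ω′ → S be measurable maps and assume: (i) Z_n → Z almost surely and V_n → V almost surely; (ii) the family {|Z_n|^m : n ≥ 1} is uniformly integrable; (iii) for every n, E[|Z_n|^m | σ(V_n)] ≤ C almost surely, where σ(V_n) is the σ-algebra generated by V_n. Then E[|Z|^m | σ(V)] ≤ C almost surely, where σ(V) is the σ-algebra generated by V. -/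
/-!
Vitali's theorem upgrades `‖Zₙ‖ ^ m → ‖Z‖ ^ m` a.s. to convergence in `L¹`. Testing the
hypothesis against `g ∘ Vₙ` for continuous `g : S → [0, 1]` gives
`E[g(Vₙ) ‖Zₙ‖ ^ m] ≤ C E[g(Vₙ)]`, and this passes to the limit. So the finite measures
`B ↦ E[‖Z‖ ^ m; V ∈ B]` and `B ↦ C P(V ∈ B)` on `S` compare on continuous `[0, 1]`-valued
functions, hence on closed sets (approximate their indicators from above) and, by inner
regularity, on all Borel sets, which is the conditional bound.
-/

open MeasureTheory Filter Topology
open scoped ENNReal NNReal BoundedContinuousFunction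

namespace MeasureTheory

variable {Ω : Type*} {m₀ : MeasurableSpace Ω} {μ : Measure Ω}

theorem UnifIntegrable.mono {ι β γ : Type*} [NormedAddCommGroup β] [NormedAddCommGroup γ]
    {p : ℝ≥0∞} {f : ι → Ω → β} {g : ι → Ω → γ} (hf : UnifIntegrable f p μ)
    (hgf : ∀ i, ∀ᵐ ω ∂μ, ‖g i ω‖ ≤ ‖f i ω‖) : UnifIntegrable g p μ := by
  intro ε hε
  obtain ⟨δ, hδ, hfδ⟩ := hf hε
  refine ⟨δ, hδ, fun i s hs hμs => (eLpNorm_mono_ae ?_).trans (hfδ i s hs hμs)⟩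
  filter_upwards [hgf i] with ω hω
  by_cases hωs : ω ∈ s <;> simp [hωs, hω]

theorem integral_mul_le_of_condExp_le [IsFiniteMeasure μ] {m : MeasurableSpace Ω} (hm : m ≤ m₀)
    {f g : Ω → ℝ} {C : ℝ} (hf : Integrable f μ) (hg : StronglyMeasurable[m] g) (hg0 : 0 ≤ g)
    (hg1 : ∀ ω, g ω ≤ 1) (hfC : μ[f|m] ≤ᵐ[μ] fun _ => C) :
    ∫ ω, g ω * f ω ∂μ ≤ C * ∫ ω, g ω ∂μ := by
  have hg_norm : ∀ᵐ ω ∂μ, ‖g ω‖ ≤ 1 :=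
    ae_of_all _ fun ω => (Real.norm_of_nonneg (hg0 ω)).trans_le (hg1 ω)
  have hg_aesm : AEStronglyMeasurable[m₀] g μ := (hg.mono hm).aestronglyMeasurable
  calc ∫ ω, g ω * f ω ∂μ = ∫ ω, (μ[g * f|m]) ω ∂μ := (integral_condExp hm).symm
    _ = ∫ ω, g ω * (μ[f|m]) ω ∂μ :=
        integral_congr_ae (condExp_stronglyMeasurable_mul_of_bound hm hg hf 1 hg_norm)
    _ ≤ ∫ ω, g ω * C ∂μ :=
        integral_mono_ae (integrable_condExp.bdd_mul hg_aesm hg_norm)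
          ((integrable_const C).bdd_mul hg_aesm hg_norm)
          (hfC.mono fun ω hω => mul_le_mul_of_nonneg_left hω (hg0 ω))
    _ = C * ∫ ω, g ω ∂μ := by rw [integral_mul_const, mul_comm]

theorem tendsto_integral_mul_of_uniformIntegrable [IsFiniteMeasure μ] {F : ℕ → Ω → ℝ}
    {f : Ω → ℝ} {g : ℕ → Ω → ℝ} {g' : Ω → ℝ} (hF : UniformIntegrable F 1 μ)
    (hFf : ∀ᵐ ω ∂μ, Tendsto (fun n => F n ω) atTop (𝓝 (f ω)))
    (hg : ∀ n, AEStronglyMeasurable (g n) μ) (hg1 : ∀ n ω, ‖g n ω‖ ≤ 1)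
    (hgg' : ∀ᵐ ω ∂μ, Tendsto (fun n => g n ω) atTop (𝓝 (g' ω))) :
    Tendsto (fun n => ∫ ω, g n ω * F n ω ∂μ) atTop (𝓝 (∫ ω, g' ω * f ω ∂μ)) := by
  have hg'1 : ∀ᵐ ω ∂μ, ‖g' ω‖ ≤ 1 :=
    hgg'.mono fun ω hω => le_of_tendsto' hω.norm fun n => hg1 n ω
  have hlim : Integrable (fun ω => g' ω * f ω) μ :=
    (hF.integrable_of_ae_tendsto hFf).bdd_mul
      (aestronglyMeasurable_of_tendsto_ae atTop hg hgg') hg'1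
  have hprod_ui : UnifIntegrable (fun n ω => g n ω * F n ω) 1 μ :=
    hF.unifIntegrable.mono fun n => ae_of_all _ fun ω => by
      rw [norm_mul]; exact mul_le_of_le_one_left (norm_nonneg _) (hg1 n ω)
  refine tendsto_integral_of_L1' _ hlim.aestronglyMeasurable
    (Eventually.of_forall fun n => (memLp_one_iff_integrable.mp (hF.memLp n)).bdd_mul (hg n)
      (ae_of_all _ (hg1 n))) ?_
  refine tendsto_Lp_finite_of_tendsto_ae le_rfl ENNReal.one_ne_top
    (fun n => (hg n).mul (hF.aestronglyMeasurable n)) (memLp_one_iff_integrable.mpr hlim)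
    hprod_ui ?_
  filter_upwards [hFf, hgg'] with ω hFω hgω
  exact hgω.mul hFω

theorem integral_comp_mul_le_of_tendsto {S : Type*} [TopologicalSpace S] [MeasurableSpace S]
    [OpensMeasurableSpace S] [IsFiniteMeasure μ] {F : ℕ → Ω → ℝ} {f : Ω → ℝ}
    {V : ℕ → Ω → S} {V' : Ω → S} {C : ℝ} (hF : UniformIntegrable F 1 μ)
    (hFf : ∀ᵐ ω ∂μ, Tendsto (fun n => F n ω) atTop (𝓝 (f ω))) (hV : ∀ n, Measurable (V n))
    (hVV' : ∀ᵐ ω ∂μ, Tendsto (fun n => V n ω) atTop (𝓝 (V' ω)))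
    (hFC : ∀ n, μ[F n | MeasurableSpace.comap (V n) inferInstance] ≤ᵐ[μ] fun _ => C)
    (g : S →ᵇ ℝ≥0) (hg1 : ∀ x, g x ≤ 1) :
    ∫ ω, (g (V' ω) : ℝ) * f ω ∂μ ≤ C * ∫ ω, (g (V' ω) : ℝ) ∂μ := by
  have hg_cont : Continuous fun x => (g x : ℝ) := NNReal.continuous_coe.comp g.continuous
  have hg_norm : ∀ x, ‖(g x : ℝ)‖ ≤ 1 := fun x => by simpa using hg1 x
  have hgV : ∀ n, AEStronglyMeasurable (fun ω => (g (V n ω) : ℝ)) μ := fun n =>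
    (hg_cont.measurable.comp (hV n)).aestronglyMeasurable
  have hgVV' : ∀ᵐ ω ∂μ, Tendsto (fun n => (g (V n ω) : ℝ)) atTop (𝓝 (g (V' ω))) :=
    hVV'.mono fun ω hω => (hg_cont.tendsto _).comp hω
  have hbound : ∀ n, ∫ ω, (g (V n ω) : ℝ) * F n ω ∂μ ≤ C * ∫ ω, (g (V n ω) : ℝ) ∂μ := fun n =>
    integral_mul_le_of_condExp_le (hV n).comap_le (memLp_one_iff_integrable.mp (hF.memLp n))
      (hg_cont.measurable.comp (comap_measurable (V n))).stronglyMeasurable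
      (fun ω => (g _).coe_nonneg) (fun ω => hg1 _) (hFC n)
  exact le_of_tendsto_of_tendsto'
    (tendsto_integral_mul_of_uniformIntegrable hF hFf hgV (fun n ω => hg_norm _) hgVV')
    ((tendsto_integral_of_dominated_convergence (fun _ => 1) hgV (integrable_const 1)
      (fun n => ae_of_all _ fun ω => hg_norm _) hgVV').const_mul C) hbound

theorem Measure.le_of_forall_lintegral_le {X : Type*} [TopologicalSpace X]
    [HasOuterApproxClosed X] [MeasurableSpace X] [OpensMeasurableSpace X] {ν₁ ν₂ : Measure X}
    [IsFiniteMeasure ν₁] [ν₁.WeaklyRegular] [IsFiniteMeasure ν₂]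
    (h : ∀ g : X →ᵇ ℝ≥0, (∀ x, g x ≤ 1) → ∫⁻ x, g x ∂ν₁ ≤ ∫⁻ x, g x ∂ν₂) : ν₁ ≤ ν₂ := by
  have h_closed : ∀ K, IsClosed K → ν₁ K ≤ ν₂ K := fun K hK =>
    ge_of_tendsto (HasOuterApproxClosed.tendsto_lintegral_apprSeq hK ν₂)
      (Eventually.of_forall fun n => (HasOuterApproxClosed.measure_le_lintegral hK ν₁ n).trans
        (h _ (HasOuterApproxClosed.apprSeq_apply_le_one hK n)))
  refine Measure.le_iff.2 fun B hB => ?_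
  rw [hB.measure_eq_iSup_isClosed_of_ne_top (measure_ne_top ν₁ B)]
  exact iSup₂_le fun K hKB => iSup_le fun hK => (h_closed K hK).trans (measure_mono hKB)

theorem Measure.map_withDensity_le_smul_map_of_forall_integral_comp_mul_le {S : Type*}
    [TopologicalSpace S] [TopologicalSpace.PseudoMetrizableSpace S] [MeasurableSpace S]
    [BorelSpace S] [IsFiniteMeasure μ] {V : Ω → S} {f : Ω → ℝ} {C : ℝ} (hV : Measurable V)
    (hf : Integrable f μ) (hf0 : 0 ≤ᵐ[μ] f) (hC : 0 ≤ C)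
    (h : ∀ g : S →ᵇ ℝ≥0, (∀ x, g x ≤ 1) →
      ∫ ω, (g (V ω) : ℝ) * f ω ∂μ ≤ C * ∫ ω, (g (V ω) : ℝ) ∂μ) :
    (μ.withDensity fun ω => ENNReal.ofReal (f ω)).map V ≤ C.toNNReal • μ.map V := by
  have : IsFiniteMeasure (μ.withDensity fun ω => ENNReal.ofReal (f ω)) :=
    isFiniteMeasure_withDensity_ofReal hf.2
  refine Measure.le_of_forall_lintegral_le fun g hg1 => ?_
  have hg : Measurable fun x => (g x : ℝ≥0∞) := by fun_prop
  have hgV_meas : Measurable fun ω => (g (V ω) : ℝ) :=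
    (NNReal.continuous_coe.comp g.continuous).measurable.comp hV
  have hgV_norm : ∀ᵐ ω ∂μ, ‖(g (V ω) : ℝ)‖ ≤ 1 := ae_of_all _ fun ω => by simpa using hg1 _
  have hgV : Integrable (fun ω => (g (V ω) : ℝ)) μ :=
    (integrable_const (1 : ℝ)).mono hgV_meas.aestronglyMeasurable (by simpa using hgV_norm)
  calc ∫⁻ x, g x ∂(μ.withDensity fun ω => ENNReal.ofReal (f ω)).map V
      = ∫⁻ ω, ENNReal.ofReal ((g (V ω) : ℝ) * f ω) ∂μ := by
        rw [lintegral_map hg hV, lintegral_withDensity_eq_lintegral_mul₀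
          hf.aemeasurable.ennreal_ofReal (hg.comp hV).aemeasurable (g := fun ω => g (V ω))]
        refine lintegral_congr fun ω => ?_
        rw [Pi.mul_apply, ENNReal.ofReal_mul (g _).coe_nonneg, ENNReal.ofReal_coe_nnreal,
          mul_comm]
    _ = ENNReal.ofReal (∫ ω, (g (V ω) : ℝ) * f ω ∂μ) :=
        (ofReal_integral_eq_lintegral_ofReal (hf.bdd_mul hgV_meas.aestronglyMeasurable hgV_norm)
          (hf0.mono fun ω hω => mul_nonneg (g _).2 hω)).symm
    _ ≤ ENNReal.ofReal (C * ∫ ω, (g (V ω) : ℝ) ∂μ) := ENNReal.ofReal_le_ofReal (h g hg1)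
    _ = ∫⁻ x, g x ∂(C.toNNReal • μ.map V) := by
        rw [lintegral_smul_measure, ENNReal.smul_def, lintegral_map hg hV, ENNReal.ofReal_mul hC,
          ofReal_integral_eq_lintegral_ofReal hgV (ae_of_all _ fun ω => (g _).2)]
        simp only [ENNReal.ofReal_coe_nnreal]
        rfl

theorem setIntegral_preimage_le_of_map_withDensity_le {S : Type*} [MeasurableSpace S]
    [IsFiniteMeasure μ] {V : Ω → S} {f : Ω → ℝ} {C : ℝ} (hV : Measurable V)
    (hf : Integrable f μ) (hf0 : 0 ≤ᵐ[μ] f) (hC : 0 ≤ C)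
    (hν : (μ.withDensity fun ω => ENNReal.ofReal (f ω)).map V ≤ C.toNNReal • μ.map V)
    {B : Set S} (hB : MeasurableSet B) :
    ∫ ω in V ⁻¹' B, f ω ∂μ ≤ C * μ.real (V ⁻¹' B) := by
  have hνB := Measure.le_iff.1 hν B hB
  rw [Measure.map_apply hV hB, Measure.smul_apply, Measure.map_apply hV hB,
    withDensity_apply _ (hV hB), ENNReal.smul_def, smul_eq_mul,
    ← ofReal_integral_eq_lintegral_ofReal hf.restrict (ae_restrict_of_ae hf0)] at hνB
  rw [← ENNReal.ofReal_le_ofReal_iff (by positivity), ENNReal.ofReal_mul hC, measureReal_def,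
    ENNReal.ofReal_toReal (measure_ne_top _ _)]
  exact hνB

theorem condExp_le_const_of_forall_setIntegral_le [IsFiniteMeasure μ] {m : MeasurableSpace Ω}
    (hm : m ≤ m₀) {f : Ω → ℝ} {C : ℝ} (hf : Integrable f μ)
    (h : ∀ s, MeasurableSet[m] s → ∫ ω in s, f ω ∂μ ≤ C * μ.real s) :
    μ[f|m] ≤ᵐ[μ] fun _ => C := by
  refine ae_le_of_ae_le_trim (ae_le_of_forall_setIntegral_le
    (integrable_condExp.trim hm stronglyMeasurable_condExp) (integrable_const C) fun s hs _ => ?_)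
  rw [← setIntegral_trim hm stronglyMeasurable_condExp hs,
    ← setIntegral_trim hm stronglyMeasurable_const hs, setIntegral_condExp hm hf hs,
    setIntegral_const, smul_eq_mul, mul_comm]
  exact h s hs

end MeasureTheory

theorem conditional_moment_bound_of_tendsto_general
    {Ω' : Type*} [mΩ' : MeasurableSpace Ω'] (P' : Measure Ω') [IsProbabilityMeasure P']
    {S : Type*} [MetricSpace S] [MeasurableSpace S] [BorelSpace S]
    {d : ℕ} (m : ℝ) (hm : 1 ≤ m) (C : ℝ) (hC : 0 ≤ C)
    (Z : ℕ → Ω' → EuclideanSpace ℝ (Fin d)) (Zlim : Ω' → EuclideanSpace ℝ (Fin d))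
    (V : ℕ → Ω' → S) (Vlim : Ω' → S)
    (hVmeas : ∀ n, Measurable (V n)) (hVlim_meas : Measurable Vlim)
    (hZconv : ∀ᵐ ω ∂P', Tendsto (fun n => Z n ω) atTop (𝓝 (Zlim ω)))
    (hVconv : ∀ᵐ ω ∂P', Tendsto (fun n => V n ω) atTop (𝓝 (Vlim ω)))
    (hUI : UniformIntegrable (fun n ω => ‖Z n ω‖ ^ m) 1 P')
    (hbound : ∀ n,
      P'[(fun ω => ‖Z n ω‖ ^ m) | MeasurableSpace.comap (V n) inferInstance]
        ≤ᵐ[P'] fun _ => C) :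
    P'[(fun ω => ‖Zlim ω‖ ^ m) | MeasurableSpace.comap Vlim inferInstance]
      ≤ᵐ[P'] fun _ => C := by
  have hmoment_conv : ∀ᵐ ω ∂P', Tendsto (fun n => ‖Z n ω‖ ^ m) atTop (𝓝 (‖Zlim ω‖ ^ m)) :=
    hZconv.mono fun ω hω => hω.norm.rpow_const (Or.inr (zero_le_one.trans hm))
  have hmoment_int : Integrable (fun ω => ‖Zlim ω‖ ^ m) P' :=
    hUI.integrable_of_ae_tendsto hmoment_conv
  refine condExp_le_const_of_forall_setIntegral_le hVlim_meas.comap_le hmoment_int ?_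
  rintro _ ⟨B, hB, rfl⟩
  have hmoment_nonneg : 0 ≤ᵐ[P'] fun ω => ‖Zlim ω‖ ^ m := ae_of_all _ fun ω => by positivity
  exact setIntegral_preimage_le_of_map_withDensity_le hVlim_meas hmoment_int hmoment_nonneg hC
    (Measure.map_withDensity_le_smul_map_of_forall_integral_comp_mul_le hVlim_meas hmoment_int
      hmoment_nonneg hC (integral_comp_mul_le_of_tendsto hUI hmoment_conv hVmeas hVconv hbound))
    hB

/-- Stability of conditional moment bounds under almost-sure convergence: if `Zₙ → Z` a.s.,
`Vₙ → V` a.s., the family `{|Zₙ|^m}` is uniformly integrable, and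
`E[|Zₙ|^m | σ(Vₙ)] ≤ C` a.s. for every `n`, then `E[|Z|^m | σ(V)] ≤ C` a.s. -/
theorem conditional_moment_bound_of_tendsto
    {Ω' : Type*} [mΩ' : MeasurableSpace Ω'] (P' : Measure Ω') [IsProbabilityMeasure P']
    {S : Type*} [MetricSpace S] [MeasurableSpace S] [BorelSpace S]
    {d : ℕ} (m : ℝ) (hm : 1 ≤ m) (C : ℝ) (hC : 0 ≤ C)
    (Z : ℕ → Ω' → EuclideanSpace ℝ (Fin d)) (Zlim : Ω' → EuclideanSpace ℝ (Fin d))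
    (V : ℕ → Ω' → S) (Vlim : Ω' → S)
    (hZmeas : ∀ n, Measurable (Z n)) (hZlim_meas : Measurable Zlim)
    (hVmeas : ∀ n, Measurable (V n)) (hVlim_meas : Measurable Vlim)
    (hZconv : ∀ᵐ ω ∂P', Tendsto (fun n => Z n ω) atTop (𝓝 (Zlim ω)))
    (hVconv : ∀ᵐ ω ∂P', Tendsto (fun n => V n ω) atTop (𝓝 (Vlim ω)))
    (hUI : UniformIntegrable (fun n ω => ‖Z n ω‖ ^ m) 1 P')
    (hbound : ∀ n,
      P'[(fun ω => ‖Z n ω‖ ^ m) | MeasurableSpace.comap (V n) inferInstance]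
        ≤ᵐ[P'] fun _ => C) :
    P'[(fun ω => ‖Zlim ω‖ ^ m) | MeasurableSpace.comap Vlim inferInstance]
      ≤ᵐ[P'] fun _ => C :=
  conditional_moment_bound_of_tendsto_general (mΩ' := mΩ') P' m hm C hC Z Zlim V Vlim hVmeas
    hVlim_meas hZconv hVconv hUI hbound
end

section
/- Let (Ω₁, F₁, P₁), (Ω₂, F₂, P₂), (Ω₃, F₃, P₃) be probability spaces and let (Ω, F, P) be their product probability space. Let ξ : Ω₃ → {0,1} be measurable with P₃(ξ = 1) = λ ∈ [0,1]. Let Z₁ ∈ L¹(Ω₁, P₁) and Z₂ ∈ L¹(Ω₂, P₂), viewed as random variables on Ω via the coordinate projections π₁, π₂, and let G₁ ⊆ F₁ and G₂ ⊆ F₂ be sub-σ-algebras with G ⊆ F the σ-algebra generated on Ω by the sets {A₁ × A₂ × Ω₃ : A₁ ∈ G₁, A₂ ∈ G₂}. Define Z := 1_{{ξ=1}} Z₁ + 1_{{ξ=0}} Z₂ on Ω. Then P-almost everywhere E_P[Z | G] = λ · (E_{P₁}[Z₁ | G₁]) ∘ π₁ + (1−λ) · (E_{P₂}[Z₂ |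 G₂]) ∘ π₂. -/
/-!
Both sides are integrable and measurable for the σ-algebra `G` generated by the cylinders
`A₁ × A₂ × Ω₃`, which form a π-system, so by Dynkin's theorem it suffices to compare their
integrals over these cylinders. Writing `Z = Z₁ ⊗ 1 ⊗ 1_{ξ=1} + 1 ⊗ Z₂ ⊗ 1_{ξ=0}`, Fubini factors
each cylinder integral of a product `f₁ ⊗ f₂ ⊗ f₃`, so conditioning on `G` acts factorwise:
`E[f₁|G₁]` on the first factor, `E[f₂|G₂]` on the second, and the mean of `f₃` on the third,
which is `λ` for `1_{ξ=1}` and `1 - λ` for `1_{ξ=0}`.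
-/

open MeasureTheory

/-- The product measure `P₁ ⊗ P₂ ⊗ P₃` on `Ω₁ × Ω₂ × Ω₃` (with the product σ-algebra built
from the given σ-algebras). -/
noncomputable def tripleProd {Ω₁ Ω₂ Ω₃ : Type*}
    {m₁ : MeasurableSpace Ω₁} {m₂ : MeasurableSpace Ω₂} {m₃ : MeasurableSpace Ω₃}
    (P₁ : Measure Ω₁) (P₂ : Measure Ω₂) (P₃ : Measure Ω₃) : Measure (Ω₁ × Ω₂ × Ω₃) :=
  @Measure.prod _ _ m₁ (@Prod.instMeasurableSpace _ _ m₂ m₃) P₁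
    (@Measure.prod _ _ m₂ m₃ P₂ P₃)

open MeasurableSpace

section PiSystem

variable {α E : Type*} [NormedAddCommGroup E] [NormedSpace ℝ E]
  {m m₀ : MeasurableSpace α} {μ : Measure α} {f g : α → E}

theorem setIntegral_eq_of_isPiSystem (hm : m ≤ m₀) {S : Set (Set α)} (hS : m = generateFrom S)
    (hpi : IsPiSystem S) (hf : Integrable f μ) (hg : Integrable g μ)
    (huniv : ∫ x, g x ∂μ = ∫ x, f x ∂μ)
    (hS_eq : ∀ s ∈ S, ∫ x in s, g x ∂μ = ∫ x in s, f x ∂μ)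
    {s : Set α} (hs : MeasurableSet[m] s) : ∫ x in s, g x ∂μ = ∫ x in s, f x ∂μ := by
  induction s, hs using induction_on_inter hS hpi with
  | empty => simp
  | basic t ht => exact hS_eq t ht
  | compl t ht ih =>
    rw [setIntegral_compl (hm t ht) hg, setIntegral_compl (hm t ht) hf, huniv, ih]
  | iUnion t hdisj ht ih =>
    rw [integral_iUnion (fun i => hm _ (ht i)) hdisj hg.integrableOn,
      integral_iUnion (fun i => hm _ (ht i)) hdisj hf.integrableOn]
    exact tsum_congr ih

theorem ae_eq_condExp_of_forall_setIntegral_eq_of_isPiSystem [CompleteSpace E] (hm : m ≤ m₀)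
    [SigmaFinite (μ.trim hm)] {S : Set (Set α)} (hS : m = generateFrom S) (hpi : IsPiSystem S)
    (hf : Integrable f μ) (hg : Integrable g μ) (hg_meas : AEStronglyMeasurable[m] g μ)
    (huniv : ∫ x, g x ∂μ = ∫ x, f x ∂μ)
    (hS_eq : ∀ s ∈ S, ∫ x in s, g x ∂μ = ∫ x in s, f x ∂μ) :
    g =ᵐ[μ] μ[f | m] :=
  ae_eq_condExp_of_forall_setIntegral_eq hm hf (fun _ _ _ => hg.integrableOn)
    (fun _ hs _ => setIntegral_eq_of_isPiSystem hm hS hpi hf hg huniv hS_eq hs) hg_meas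

end PiSystem

section TripleProduct

variable {Ω₁ Ω₂ Ω₃ : Type*}

def cylinderRectangles (G₁ : MeasurableSpace Ω₁) (G₂ : MeasurableSpace Ω₂) :
    Set (Set (Ω₁ × Ω₂ × Ω₃)) :=
  {s | ∃ A₁ A₂, MeasurableSet[G₁] A₁ ∧ MeasurableSet[G₂] A₂ ∧ s = A₁ ×ˢ A₂ ×ˢ Set.univ}

variable {G₁ : MeasurableSpace Ω₁} {G₂ : MeasurableSpace Ω₂}

theorem isPiSystem_cylinderRectangles :
    IsPiSystem (cylinderRectangles (Ω₃ := Ω₃) G₁ G₂) := by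
  rintro _ ⟨A₁, A₂, hA₁, hA₂, rfl⟩ _ ⟨B₁, B₂, hB₁, hB₂, rfl⟩ -
  refine ⟨A₁ ∩ B₁, A₂ ∩ B₂, hA₁.inter hB₁, hA₂.inter hB₂, ?_⟩
  simp only [Set.prod_inter_prod, Set.inter_self]

theorem measurable_fst_generateFrom_cylinderRectangles :
    Measurable[generateFrom (cylinderRectangles (Ω₃ := Ω₃) G₁ G₂), G₁] Prod.fst :=
  fun A hA => measurableSet_generateFrom ⟨A, Set.univ, hA, MeasurableSet.univ, by ext; simp⟩

theorem measurable_fst_snd_generateFrom_cylinderRectangles :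
    Measurable[generateFrom (cylinderRectangles (Ω₃ := Ω₃) G₁ G₂), G₂] fun ω => ω.2.1 :=
  fun A hA => measurableSet_generateFrom ⟨Set.univ, A, MeasurableSet.univ, hA, by ext; simp⟩

variable {m₁ : MeasurableSpace Ω₁} {m₂ : MeasurableSpace Ω₂} {m₃ : MeasurableSpace Ω₃}
  {P₁ : Measure Ω₁} {P₂ : Measure Ω₂} {P₃ : Measure Ω₃}

theorem generateFrom_cylinderRectangles_le (hG₁ : G₁ ≤ m₁) (hG₂ : G₂ ≤ m₂) :
    generateFrom (cylinderRectangles (Ω₃ := Ω₃) G₁ G₂) ≤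
      (inferInstance : MeasurableSpace (Ω₁ × Ω₂ × Ω₃)) :=
  generateFrom_le fun _ ⟨_, _, hA₁, hA₂, hs⟩ =>
    hs ▸ (hG₁ _ hA₁).prod ((hG₂ _ hA₂).prod MeasurableSet.univ)

theorem setIntegral_prod_prod_mul {𝕜 : Type*} [RCLike 𝕜] [SFinite P₁] [SFinite P₂]
    [SFinite P₃] (f₁ : Ω₁ → 𝕜) (f₂ : Ω₂ → 𝕜) (f₃ : Ω₃ → 𝕜)
    (A₁ : Set Ω₁) (A₂ : Set Ω₂) (A₃ : Set Ω₃) :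
    ∫ ω in A₁ ×ˢ A₂ ×ˢ A₃, f₁ ω.1 * (f₂ ω.2.1 * f₃ ω.2.2) ∂P₁.prod (P₂.prod P₃) =
      (∫ x in A₁, f₁ x ∂P₁) * ((∫ y in A₂, f₂ y ∂P₂) * ∫ z in A₃, f₃ z ∂P₃) := by
  rw [setIntegral_prod_mul f₁ (fun y : Ω₂ × Ω₃ => f₂ y.1 * f₃ y.2), setIntegral_prod_mul]

theorem condExp_prod_prod_mul [IsFiniteMeasure P₁] [IsFiniteMeasure P₂]
    [IsProbabilityMeasure P₃] (hG₁ : G₁ ≤ m₁) (hG₂ : G₂ ≤ m₂) {f₁ : Ω₁ → ℝ} {f₂ : Ω₂ → ℝ}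
    {f₃ : Ω₃ → ℝ} (hf₁ : Integrable f₁ P₁) (hf₂ : Integrable f₂ P₂) (hf₃ : Integrable f₃ P₃) :
    (P₁.prod (P₂.prod P₃))[fun ω => f₁ ω.1 * (f₂ ω.2.1 * f₃ ω.2.2) |
        generateFrom (cylinderRectangles G₁ G₂)] =ᵐ[P₁.prod (P₂.prod P₃)]
      fun ω => P₁[f₁ | G₁] ω.1 * (P₂[f₂ | G₂] ω.2.1 * ∫ z, f₃ z ∂P₃) := by
  set c := ∫ z, f₃ z ∂P₃
  have hrect : ∀ A₁ A₂, MeasurableSet[G₁] A₁ → MeasurableSet[G₂] A₂ →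
      ∫ ω in A₁ ×ˢ A₂ ×ˢ Set.univ, P₁[f₁ | G₁] ω.1 * (P₂[f₂ | G₂] ω.2.1 * c)
          ∂P₁.prod (P₂.prod P₃) =
        ∫ ω in A₁ ×ˢ A₂ ×ˢ Set.univ, f₁ ω.1 * (f₂ ω.2.1 * f₃ ω.2.2) ∂P₁.prod (P₂.prod P₃) := by
    intro A₁ A₂ hA₁ hA₂
    rw [setIntegral_prod_prod_mul _ _ (fun _ => c), setIntegral_prod_prod_mul,
      setIntegral_condExp hG₁ hf₁ hA₁, setIntegral_condExp hG₂ hf₂ hA₂]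
    simp [c]
  refine (ae_eq_condExp_of_forall_setIntegral_eq_of_isPiSystem
    (generateFrom_cylinderRectangles_le hG₁ hG₂) rfl isPiSystem_cylinderRectangles
    (hf₁.mul_prod (hf₂.mul_prod hf₃))
    (integrable_condExp.mul_prod (integrable_condExp.mul_prod (integrable_const c))) ?_ ?_ ?_).symm
  · exact ((stronglyMeasurable_condExp.comp_measurable
      measurable_fst_generateFrom_cylinderRectangles).mul
      ((stronglyMeasurable_condExp.comp_measurable
        measurable_fst_snd_generateFrom_cylinderRectangles).mul_const c)).aestronglyMeasurable
  · simpa using hrect Set.univ Set.univ MeasurableSet.univ MeasurableSet.univ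
  · rintro _ ⟨A₁, A₂, hA₁, hA₂, rfl⟩
    exact hrect A₁ A₂ hA₁ hA₂

end TripleProduct

/-- Mixture identity for conditional expectations on a product probability space with an
independent Bernoulli switch `ξ` on the third factor:
`E[1_{ξ=1} Z₁ + 1_{ξ=0} Z₂ | G] = λ E[Z₁|G₁] ∘ π₁ + (1−λ) E[Z₂|G₂] ∘ π₂` a.e., where `G` is
generated by the rectangles `A₁ × A₂ × Ω₃` with `A₁ ∈ G₁`, `A₂ ∈ G₂`. -/
theorem condexp_mixture_product
    {Ω₁ Ω₂ Ω₃ : Type*} [m₁ : MeasurableSpace Ω₁] [m₂ : MeasurableSpace Ω₂]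
    [m₃ : MeasurableSpace Ω₃]
    (P₁ : Measure Ω₁) (P₂ : Measure Ω₂) (P₃ : Measure Ω₃)
    [IsProbabilityMeasure P₁] [IsProbabilityMeasure P₂] [IsProbabilityMeasure P₃]
    (lam : ℝ) (hlam : lam ∈ Set.Icc (0 : ℝ) 1)
    (ξ : Ω₃ → Bool) (hξ : Measurable ξ)
    (hξ_law : P₃ {ω₃ | ξ ω₃ = true} = ENNReal.ofReal lam)
    (Z₁ : Ω₁ → ℝ) (Z₂ : Ω₂ → ℝ) (hZ₁ : Integrable Z₁ P₁) (hZ₂ : Integrable Z₂ P₂)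
    (G₁ : MeasurableSpace Ω₁) (hG₁ : G₁ ≤ m₁)
    (G₂ : MeasurableSpace Ω₂) (hG₂ : G₂ ≤ m₂) :
    (tripleProd P₁ P₂ P₃)[(fun ω : Ω₁ × Ω₂ × Ω₃ =>
        if ξ ω.2.2 = true then Z₁ ω.1 else Z₂ ω.2.1)
      | MeasurableSpace.generateFrom
          {s : Set (Ω₁ × Ω₂ × Ω₃) | ∃ A₁ A₂, MeasurableSet[G₁] A₁ ∧ MeasurableSet[G₂] A₂ ∧
            s = A₁ ×ˢ A₂ ×ˢ (Set.univ : Set Ω₃)}]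
      =ᵐ[tripleProd P₁ P₂ P₃]
        fun ω : Ω₁ × Ω₂ × Ω₃ =>
          lam * (P₁[Z₁ | G₁]) ω.1 + (1 - lam) * (P₂[Z₂ | G₂]) ω.2.1 := by
  -- `G₁` and `G₂` are local instances as well; make `m₁` and `m₂` the ambient σ-algebras again.
  let := m₁
  let := m₂
  have hξ_true : MeasurableSet {z | ξ z = true} := hξ (measurableSet_singleton true)
  have hξ_false : MeasurableSet {z | ξ z = false} := hξ (measurableSet_singleton false)
  set χ₁ := {z | ξ z = true}.indicator (1 : Ω₃ → ℝ)
  set χ₀ := {z | ξ z = false}.indicator (1 : Ω₃ → ℝ)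
  have hχ₁ : Integrable χ₁ P₃ := (integrable_const 1).indicator hξ_true
  have hχ₀ : Integrable χ₀ P₃ := (integrable_const 1).indicator hξ_false
  have hlaw_true : ∫ z, χ₁ z ∂P₃ = lam := by
    rw [integral_indicator_one hξ_true, measureReal_def, hξ_law, ENNReal.toReal_ofReal hlam.1]
  have hlaw_false : ∫ z, χ₀ z ∂P₃ = 1 - lam := by
    have hcompl : {z | ξ z = false} = {z | ξ z = true}ᶜ := by ext; simp
    rw [integral_indicator_one hξ_false, hcompl, probReal_compl_eq_one_sub hξ_true,
      measureReal_def, hξ_law, ENNReal.toReal_ofReal hlam.1]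
  have hsplit : (fun ω : Ω₁ × Ω₂ × Ω₃ => if ξ ω.2.2 = true then Z₁ ω.1 else Z₂ ω.2.1) =
      (fun ω => Z₁ ω.1 * (1 * χ₁ ω.2.2)) + fun ω => 1 * (Z₂ ω.2.1 * χ₀ ω.2.2) := by
    ext ω
    cases h : ξ ω.2.2 <;> simp [χ₁, χ₀, Set.indicator_apply, h]
  show (P₁.prod (P₂.prod P₃))[_ | generateFrom (cylinderRectangles G₁ G₂)]
    =ᵐ[P₁.prod (P₂.prod P₃)] _
  rw [hsplit]
  filter_upwards [condExp_add (hZ₁.mul_prod ((integrable_const 1).mul_prod hχ₁))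
      ((integrable_const 1).mul_prod (hZ₂.mul_prod hχ₀)) _,
    condExp_prod_prod_mul hG₁ hG₂ hZ₁ (integrable_const 1) hχ₁,
    condExp_prod_prod_mul hG₁ hG₂ (integrable_const 1) hZ₂ hχ₀] with ω hadd h₁ h₀
  rw [hadd, Pi.add_apply, h₁, h₀, condExp_const hG₂, condExp_const hG₁, hlaw_true, hlaw_false]
  ring
end
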